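/- arXiv:1007.1296 — 3 statements merged into one kernel-verified Lean document; each statement's English description precedes it below -/
import Mathlib

section
/- Let R be a commutative Noetherian ring and X a finitely generated R-module. Then there is an inclusion-reversing bijection between the finite length R-submodules of X and the finite length factor modules of the Matlis dual DX, given by Y ↦ DY, where D = Hom_R(-, E) with E the direct sum of injective hulls E(R/m) over all maximal ideals m. -/
noncomputable section

universe u

/-- `E` is an injective hull of the `R`-module `A`: `E` is injective and contains `A`
as an essential submodule. -/
def IsInjectiveHull (R : Type u) [CommRing R] (A : Type u) [AddCommGroup A] [Module R A]
    (E : Type u) [AddCommGroup E] [Module R E] : Prop :=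
  Module.Injective R E ∧ ∃ f : A →ₗ[R] E, Function.Injective f ∧
    ∀ N : Submodule R E, N ≠ ⊥ → ∃ x ∈ N, x ≠ 0 ∧ x ∈ LinearMap.range f

/-- The submodule of `Hom_R(X, E)` of maps vanishing on the submodule `Y ≤ X`;
the quotient by it is the Matlis dual `D Y = Hom_R(Y, E)` of `Y`. -/
def annihilatorOf (R : Type u) [CommRing R] {X E : Type u} [AddCommGroup X] [Module R X]
    [AddCommGroup E] [Module R E] (Y : Submodule R X) : Submodule R (X →ₗ[R] E) where
  carrier := {g | ∀ y ∈ Y, g y = 0}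
  add_mem' := by intro a b ha hb y hy; simp [ha y hy, hb y hy]
  zero_mem' := by intro y hy; simp
  smul_mem' := by intro c g hg y hy; simp [hg y hy]

/-!
Essentiality of `⨁ R/m ⊆ E` makes the `m`-torsion of `E` simple for every maximal ideal `m`.
Hence `E` is an injective cogenerator, and `D = Hom(-, E)` is exact and sends simple modules to
simple modules. Induction along a composition series (the four lemma for the evaluation maps
`W → DDW`) shows that `D` preserves finite length and that `W → DDW` is bijective when `W` has
finite length. Now `DX ⧸ ann Y ≅ DY` by injectivity, and `Y` is recovered from `ann Y` as the
common zero set of its elements because `E` cogenerates. Conversely, if `DX ⧸ K` has finite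
length and `I` is its annihilator, then `R ⧸ I` is Artinian, so `W = (0 :_X I)` has finite length
and `ann W ⊆ I • DX ⊆ K`; double duality on `W` shows that `K` is the annihilator of its
common zero set.
-/

open scoped DirectSum

open Submodule (torsionBySet mem_torsionBySet_iff)

section FiniteLength

variable {R : Type*} [Ring R]

theorem IsFiniteLength.of_exact {A B C : Type*} [AddCommGroup A] [Module R A] [AddCommGroup B]
    [Module R B] [AddCommGroup C] [Module R C] {f : A →ₗ[R] B} {g : B →ₗ[R] C}
    (h : Function.Exact f g) (hA : IsFiniteLength R A) (hC : IsFiniteLength R C) :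
    IsFiniteLength R B := by
  rw [isFiniteLength_iff_isNoetherian_isArtinian] at hA hC ⊢
  obtain ⟨_, _⟩ := hA
  obtain ⟨_, _⟩ := hC
  have hfg := (LinearMap.exact_iff.mp h).symm
  exact ⟨isNoetherian_of_range_eq_ker f g hfg, isArtinian_of_range_eq_ker f g hfg⟩

theorem IsFiniteLength.of_isSimpleModule {S : Type*} [AddCommGroup S] [Module R S]
    [IsSimpleModule R S] : IsFiniteLength R S :=
  isFiniteLength_iff_isNoetherian_isArtinian.mpr ⟨inferInstance, inferInstance⟩

end FiniteLength

section Dual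

variable {R : Type u} [CommRing R] {E : Type u} [AddCommGroup E] [Module R E]
  {X Y : Type u} [AddCommGroup X] [Module R X] [AddCommGroup Y] [Module R Y]

theorem exact_lcomp_mkQ_lcomp_subtype (N : Submodule R X) :
    Function.Exact (LinearMap.lcomp R E N.mkQ) (LinearMap.lcomp R E N.subtype) :=
  LinearMap.exact_lcomp_of_exact_of_surjective E (LinearMap.exact_subtype_mkQ N) N.mkQ_surjective

variable [Module.Injective R E]

theorem Module.Injective.exists_comp_eq_of_ker_le (α : X →ₗ[R] Y) (g : X →ₗ[R] E)
    (hker : LinearMap.ker α ≤ LinearMap.ker g) : ∃ h : Y →ₗ[R] E, h ∘ₗ α = g := by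
  obtain ⟨h, hh⟩ := Module.Injective.extension_property R E _ _
    ((LinearMap.ker α).liftQ α le_rfl)
    (LinearMap.ker_eq_bot.mp (Submodule.ker_liftQ_eq_bot _ α _ le_rfl))
    ((LinearMap.ker α).liftQ g hker)
  exact ⟨h, LinearMap.ext fun x => LinearMap.congr_fun hh (Submodule.Quotient.mk x)⟩

theorem Module.Injective.exists_apply_eq_of_torsionOf_le {x : X} {e : E}
    (h : Ideal.torsionOf R X x ≤ Ideal.torsionOf R E e) : ∃ φ : X →ₗ[R] E, φ x = e := by
  obtain ⟨φ, hφ⟩ := Module.Injective.exists_comp_eq_of_ker_le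
    (LinearMap.toSpanSingleton R X x) (LinearMap.toSpanSingleton R E e) h
  exact ⟨φ, by simpa using LinearMap.congr_fun hφ 1⟩

theorem LinearMap.lcomp_surjective_of_injective {f : X →ₗ[R] Y} (hf : Function.Injective f) :
    Function.Surjective (LinearMap.lcomp R E f) := fun g =>
  (Module.Injective.extension_property R E _ _ f hf g).imp fun _ h => h

theorem exact_lcomp_lcomp_subtype_lcomp_lcomp_mkQ (N : Submodule R X) :
    Function.Exact (LinearMap.lcomp R E (LinearMap.lcomp R E N.subtype))
      (LinearMap.lcomp R E (LinearMap.lcomp R E N.mkQ)) :=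
  LinearMap.exact_lcomp_of_exact_of_surjective E (exact_lcomp_mkQ_lcomp_subtype N)
    (LinearMap.lcomp_surjective_of_injective N.injective_subtype)

end Dual

section Socle

variable {R : Type u} [CommRing R]

theorem mem_span_smul_of_mem_torsionBySet {M : Type*} [AddCommGroup M] [Module R M]
    {m : Ideal R} (hm : m.IsMaximal) {e : M} (he : e ∈ torsionBySet R M m) {r : R}
    (hr : r • e ≠ 0) : e ∈ R ∙ (r • e) := by
  rw [mem_torsionBySet_iff] at he
  obtain ⟨y, i, hi, hyi⟩ := hm.exists_inv fun hrm => hr (he ⟨r, hrm⟩)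
  refine Submodule.mem_span_singleton.mpr ⟨y, ?_⟩
  calc y • r • e = (y * r + i) • e := by rw [add_smul, mul_smul, he ⟨i, hi⟩, add_zero]
    _ = e := by rw [hyi, one_smul]

theorem DirectSum.mem_span_lof_one_of_mem_torsionBySet [DecidableEq (MaximalSpectrum R)]
    {m : MaximalSpectrum R} {a : ⨁ n : MaximalSpectrum R, R ⧸ n.asIdeal}
    (ha : a ∈ torsionBySet R _ m.asIdeal) :
    a ∈ R ∙ DirectSum.lof R _ (fun n : MaximalSpectrum R => R ⧸ n.asIdeal) m 1 := by
  rw [mem_torsionBySet_iff] at ha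
  have hcomp : ∀ n ≠ m, a n = 0 := by
    intro n hnm
    obtain ⟨t, htm, htn⟩ : ∃ t ∈ m.asIdeal, t ∉ n.asIdeal := by
      by_contra! h
      exact hnm (MaximalSpectrum.ext (m.isMaximal.eq_of_le n.isMaximal.ne_top h).symm)
    have : Ideal.Quotient.mk n.asIdeal t * a n = 0 := by
      simpa [DirectSum.smul_apply, Algebra.smul_def] using congrArg (· n) (ha ⟨t, htm⟩)
    exact (mul_eq_zero.mp this).resolve_left (by simpa [Ideal.Quotient.eq_zero_iff_mem] using htn)
  obtain ⟨c, hc⟩ := Ideal.Quotient.mk_surjective (a m)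
  refine Submodule.mem_span_singleton.mpr ⟨c, DFinsupp.ext fun n => ?_⟩
  by_cases hnm : n = m
  · subst hnm
    simp [DirectSum.lof_eq_of, DirectSum.smul_apply, ← hc, Algebra.smul_def]
  · simp [DirectSum.lof_eq_of, DirectSum.smul_apply, DirectSum.of_eq_of_ne _ _ _ hnm,
      hcomp n hnm]

end Socle

namespace IsInjectiveHull

variable {R : Type u} [CommRing R] {E : Type u} [AddCommGroup E] [Module R E]
  {W : Type u} [AddCommGroup W] [Module R W]

theorem exists_torsionBySet_eq_span
    (hE : IsInjectiveHull R (⨁ m : MaximalSpectrum R, R ⧸ m.asIdeal) E)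
    (m : MaximalSpectrum R) :
    ∃ u : E, u ≠ 0 ∧ torsionBySet R E m.asIdeal = R ∙ u := by
  classical
  obtain ⟨-, f, hf, hess⟩ := hE
  set v := DirectSum.lof R _ (fun n : MaximalSpectrum R => R ⧸ n.asIdeal) m 1
  have hv0 : v ≠ 0 := by
    have : Nontrivial (R ⧸ m.asIdeal) := Ideal.Quotient.nontrivial_iff.mpr m.isMaximal.ne_top
    intro h
    simpa [v, DirectSum.lof_eq_of] using congrArg (fun a : ⨁ n : MaximalSpectrum R,
      R ⧸ n.asIdeal => a m) h
  have hv : v ∈ torsionBySet R _ m.asIdeal := (mem_torsionBySet_iff _ _).mpr fun ⟨t, ht⟩ => by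
    simp [v, ← map_smul, Algebra.smul_def, Ideal.Quotient.eq_zero_iff_mem.mpr ht]
  -- A nonzero `e` killed by `m` has a nonzero multiple `f a`, and `e` is in turn a multiple of it.
  refine ⟨f v, (map_ne_zero_iff f hf).mpr hv0, le_antisymm (fun e he => ?_) ?_⟩
  · obtain rfl | he0 := eq_or_ne e 0
    · exact zero_mem _
    obtain ⟨_, hx, hx0, a, rfl⟩ := hess (R ∙ e) (by simpa using he0)
    obtain ⟨r, hr⟩ := Submodule.mem_span_singleton.mp hx
    have ha : a ∈ torsionBySet R _ m.asIdeal := by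
      refine (mem_torsionBySet_iff _ _).mpr fun t => hf ?_
      rw [map_smul, map_zero, ← hr, smul_comm, (mem_torsionBySet_iff _ _).mp he t, smul_zero]
    obtain ⟨c, rfl⟩ := Submodule.mem_span_singleton.mp
      (DirectSum.mem_span_lof_one_of_mem_torsionBySet ha)
    have hsmul := mem_span_smul_of_mem_torsionBySet m.isMaximal he (hr ▸ hx0)
    rw [hr, map_smul] at hsmul
    exact Submodule.span_singleton_smul_le R c (f v) hsmul
  · rw [Submodule.span_singleton_le_iff_mem, mem_torsionBySet_iff]
    rintro t
    rw [← map_smul, (mem_torsionBySet_iff _ _).mp hv t, map_zero]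

theorem isAtom_torsionBySet
    (hE : IsInjectiveHull R (⨁ m : MaximalSpectrum R, R ⧸ m.asIdeal) E)
    (m : MaximalSpectrum R) :
    IsAtom (torsionBySet R E m.asIdeal) := by
  obtain ⟨u, hu0, hT⟩ := hE.exists_torsionBySet_eq_span m
  have hu : u ∈ torsionBySet R E m.asIdeal := hT ▸ Submodule.mem_span_singleton_self u
  refine ⟨by simpa [hT] using hu0, fun N hN => ?_⟩
  by_contra hN0
  obtain ⟨x, hxN, hx0⟩ := Submodule.ne_bot_iff N |>.mp hN0
  obtain ⟨c, rfl⟩ := Submodule.mem_span_singleton.mp (hT ▸ hN.le hxN)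
  refine hN.not_ge (hT ▸ (Submodule.span_singleton_le_iff_mem _ _).mpr ?_)
  exact Submodule.span_singleton_le_iff_mem _ _ |>.mpr hxN
    (mem_span_smul_of_mem_torsionBySet m.isMaximal hu hx0)

theorem exists_apply_ne_zero
    (hE : IsInjectiveHull R (⨁ m : MaximalSpectrum R, R ⧸ m.asIdeal) E) {w : W} (hw : w ≠ 0) :
    ∃ φ : W →ₗ[R] E, φ w ≠ 0 := by
  have := hE.1
  obtain ⟨m, hm, hwm⟩ :=
    Ideal.exists_le_maximal _ ((Ideal.torsionOf_eq_top_iff (R := R) w).not.mpr hw)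
  obtain ⟨u, hu, hu0⟩ := Submodule.ne_bot_iff _ |>.mp (hE.isAtom_torsionBySet ⟨m, hm⟩).1
  have hmu : m ≤ Ideal.torsionOf R E u := fun r hr => (mem_torsionBySet_iff _ _).mp hu ⟨r, hr⟩
  obtain ⟨φ, hφ⟩ := Module.Injective.exists_apply_eq_of_torsionOf_le (hwm.trans hmu)
  exact ⟨φ, hφ ▸ hu0⟩

theorem exists_le_ker_and_apply_ne_zero
    (hE : IsInjectiveHull R (⨁ m : MaximalSpectrum R, R ⧸ m.asIdeal) E) {P : Submodule R W}
    {x : W} (hx : x ∉ P) : ∃ φ : W →ₗ[R] E, P ≤ LinearMap.ker φ ∧ φ x ≠ 0 := by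
  obtain ⟨φ, hφ⟩ := hE.exists_apply_ne_zero (w := P.mkQ x) (by simpa using hx)
  refine ⟨φ ∘ₗ P.mkQ, fun y hy => ?_, hφ⟩
  simp [(Submodule.Quotient.mk_eq_zero P).mpr hy]

theorem isSimpleModule_linearMap
    (hE : IsInjectiveHull R (⨁ m : MaximalSpectrum R, R ⧸ m.asIdeal) E) [IsSimpleModule R W] :
    IsSimpleModule R (W →ₗ[R] E) := by
  have := IsSimpleModule.nontrivial R W
  obtain ⟨w, hw⟩ := exists_ne (0 : W)
  have hspan := IsSimpleModule.span_singleton_eq_top R hw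
  let m : MaximalSpectrum R := ⟨_, IsSimpleModule.ker_toSpanSingleton_isMaximal R hw⟩
  have hT : ∀ g : W →ₗ[R] E, g w ∈ torsionBySet R E m.asIdeal := fun g =>
    (mem_torsionBySet_iff _ _).mpr fun ⟨r, hr⟩ => by
      rw [← map_smul, show r • w = 0 by simpa using LinearMap.mem_ker.mp hr, map_zero]
  refine isSimpleModule_iff_toSpanSingleton_surjective.mpr ⟨?_, fun g hg h => ?_⟩
  · obtain ⟨φ, hφ⟩ := hE.exists_apply_ne_zero hw
    exact ⟨φ, 0, fun h0 => hφ (by simp [h0])⟩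
  have hgw : g w ≠ 0 := fun h0 => hg (LinearMap.ext_on hspan (by simpa using h0))
  have hgT := (hE.isAtom_torsionBySet m).le_iff.mp
    ((Submodule.span_singleton_le_iff_mem _ _).mpr (hT g))
  obtain ⟨c, hc⟩ := Submodule.mem_span_singleton.mp
    ((hgT.resolve_left (by simpa using hgw)) ▸ hT h)
  exact ⟨c, LinearMap.ext_on hspan (by simpa using hc)⟩

theorem injective_applyₗ
    (hE : IsInjectiveHull R (⨁ m : MaximalSpectrum R, R ⧸ m.asIdeal) E) :
    Function.Injective (LinearMap.applyₗ : W →ₗ[R] (W →ₗ[R] E) →ₗ[R] E) := by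
  refine (injective_iff_map_eq_zero _).mpr fun w hw => by_contra fun hw0 => ?_
  obtain ⟨φ, hφ⟩ := hE.exists_apply_ne_zero hw0
  exact hφ (by simpa using LinearMap.congr_fun hw φ)

theorem bijective_applyₗ_of_isSimpleModule
    (hE : IsInjectiveHull R (⨁ m : MaximalSpectrum R, R ⧸ m.asIdeal) E) [IsSimpleModule R W] :
    Function.Bijective (LinearMap.applyₗ : W →ₗ[R] (W →ₗ[R] E) →ₗ[R] E) := by
  have := hE.isSimpleModule_linearMap (W := W)
  have := hE.isSimpleModule_linearMap (W := W →ₗ[R] E)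
  have := IsSimpleModule.nontrivial R W
  refine ⟨hE.injective_applyₗ, LinearMap.range_eq_top.mp ?_⟩
  refine (eq_bot_or_eq_top _).resolve_left fun h => ?_
  obtain ⟨w, hw⟩ := exists_ne (0 : W)
  exact hw (hE.injective_applyₗ (by simp [LinearMap.range_eq_bot.mp h]))

theorem isFiniteLength_linearMap
    (hE : IsInjectiveHull R (⨁ m : MaximalSpectrum R, R ⧸ m.asIdeal) E)
    (hW : IsFiniteLength R W) : IsFiniteLength R (W →ₗ[R] E) := by
  induction hW with
  | of_subsingleton => exact .of_subsingleton
  | @of_simple_quotient W _ _ N _ _ ih =>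
    have := hE.isSimpleModule_linearMap (W := W ⧸ N)
    exact .of_exact (exact_lcomp_mkQ_lcomp_subtype _) .of_isSimpleModule ih

theorem surjective_applyₗ
    (hE : IsInjectiveHull R (⨁ m : MaximalSpectrum R, R ⧸ m.asIdeal) E)
    (hW : IsFiniteLength R W) :
    Function.Surjective (LinearMap.applyₗ : W →ₗ[R] (W →ₗ[R] E) →ₗ[R] E) := by
  have := hE.1
  induction hW with
  | of_subsingleton => exact fun ξ => ⟨0, Subsingleton.elim _ _⟩
  | @of_simple_quotient W _ _ N _ _ ih =>
    have hDDmkQ : Function.Surjective (LinearMap.lcomp R E (LinearMap.lcomp R E N.mkQ)) :=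
      LinearMap.lcomp_surjective_of_injective
        (LinearMap.lcomp_injective_of_surjective _ N.mkQ_surjective)
    exact LinearMap.surjective_of_surjective_of_surjective_of_injective
      N.subtype N.mkQ (0 : W ⧸ N →ₗ[R] Unit)
      (LinearMap.lcomp R E (LinearMap.lcomp R E N.subtype))
      (LinearMap.lcomp R E (LinearMap.lcomp R E N.mkQ)) (0 : _ →ₗ[R] Unit)
      LinearMap.applyₗ LinearMap.applyₗ LinearMap.applyₗ 0 rfl rfl (by simp)
      (fun y => by simpa using N.mkQ_surjective y)
      (exact_lcomp_lcomp_subtype_lcomp_lcomp_mkQ N)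
      (fun y => by simpa using hDDmkQ y)
      ih hE.bijective_applyₗ_of_isSimpleModule.2 (fun _ _ _ => Subsingleton.elim _ _)

end IsInjectiveHull

section Annihilator

variable {R : Type u} [CommRing R] {E : Type u} [AddCommGroup E] [Module R E]
  {X : Type u} [AddCommGroup X] [Module R X]

def coannihilatorOf (K : Submodule R (X →ₗ[R] E)) : Submodule R X where
  carrier := {x | ∀ g ∈ K, g x = 0}
  add_mem' ha hb g hg := by simp [ha g hg, hb g hg]
  zero_mem' g _ := map_zero g
  smul_mem' c x hx g hg := by simp [hx g hg]

theorem mem_annihilatorOf {Y : Submodule R X} {g : X →ₗ[R] E} :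
    g ∈ annihilatorOf R Y ↔ ∀ y ∈ Y, g y = 0 := Iff.rfl

theorem annihilatorOf_antitone : Antitone (annihilatorOf R (X := X) (E := E)) :=
  fun _ _ hY _ hg y hy => hg y (hY hy)

theorem coannihilatorOf_antitone : Antitone (coannihilatorOf (R := R) (X := X) (E := E)) :=
  fun _ _ hK _ hx g hg => hx g (hK hg)

theorem annihilatorOf_eq_ker_lcomp_subtype (Y : Submodule R X) :
    annihilatorOf R (E := E) Y = LinearMap.ker (LinearMap.lcomp R E Y.subtype) := by
  ext g
  simp [mem_annihilatorOf, LinearMap.ext_iff]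

def quotientAnnihilatorOfEquiv [Module.Injective R E] (Y : Submodule R X) :
    ((X →ₗ[R] E) ⧸ annihilatorOf R (E := E) Y) ≃ₗ[R] (Y →ₗ[R] E) :=
  (Submodule.quotEquivOfEq _ _ (annihilatorOf_eq_ker_lcomp_subtype Y)).trans
    ((LinearMap.lcomp R E Y.subtype).quotKerEquivOfSurjective
      (LinearMap.lcomp_surjective_of_injective Y.injective_subtype))

theorem IsInjectiveHull.coannihilatorOf_annihilatorOf
    (hE : IsInjectiveHull R (⨁ m : MaximalSpectrum R, R ⧸ m.asIdeal) E) (Y : Submodule R X) :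
    coannihilatorOf (annihilatorOf R (E := E) Y) = Y := by
  refine le_antisymm (fun x hx => by_contra fun hxY => ?_) fun y hy g hg => hg y hy
  obtain ⟨φ, hYφ, hφx⟩ := hE.exists_le_ker_and_apply_ne_zero hxY
  exact hφx (hx φ hYφ)

end Annihilator

section Artinian

variable {R : Type u} [CommRing R]

theorem isArtinianRing_quotient_annihilator (M : Type*) [AddCommGroup M] [Module R M]
    [Module.Finite R M] [IsArtinian R M] : IsArtinianRing (R ⧸ Module.annihilator R M) := by
  obtain ⟨s, hs⟩ := Module.Finite.fg_top (R := R) (M := M)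
  let φ : R →ₗ[R] (s → M) := LinearMap.pi fun g => LinearMap.toSpanSingleton R M g
  have hφ : LinearMap.ker φ = Module.annihilator R M := by
    rw [LinearMap.ker_pi, ← Submodule.annihilator_top, ← hs, Submodule.annihilator_span]
    rfl
  have : IsArtinian R (R ⧸ LinearMap.ker φ) :=
    isArtinian_of_injective ((LinearMap.ker φ).liftQ φ le_rfl)
      (LinearMap.ker_eq_bot.mp (Submodule.ker_liftQ_eq_bot _ _ _ le_rfl))
  exact hφ ▸ isArtinian_of_tower R this

theorem isFiniteLength_torsionBySet {X : Type*} [AddCommGroup X] [Module R X] [IsNoetherian R X]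
    (I : Ideal R) [IsArtinianRing (R ⧸ I)] : IsFiniteLength R (torsionBySet R X I) := by
  refine isFiniteLength_iff_isNoetherian_isArtinian.mpr ⟨inferInstance, ?_⟩
  have : Module.Finite (R ⧸ I) (torsionBySet R X I) :=
    Module.Finite.of_restrictScalars_finite R _ _
  exact isArtinian_of_surjective_algebraMap (R := R ⧸ I) Ideal.Quotient.mk_surjective

end Artinian

section Surjectivity

variable {R : Type u} [CommRing R] {E : Type u} [AddCommGroup E] [Module R E]
  {X : Type u} [AddCommGroup X] [Module R X]

theorem annihilatorOf_torsionBySet_le_smul_top [Module.Injective R E] {I : Ideal R}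
    (hI : I.FG) : annihilatorOf R (E := E) (torsionBySet R X I) ≤ I • ⊤ := by
  classical
  obtain ⟨t, rfl⟩ := hI
  -- `g` vanishes on the kernel of `x ↦ (c • x)_{c ∈ t}`, so it factors through `X^t`.
  let α : X →ₗ[R] (t → X) := LinearMap.pi fun c => (c : R) • LinearMap.id
  have hker : LinearMap.ker α = torsionBySet R X (Ideal.span (t : Set R)) := by
    rw [← Submodule.torsionBySet_eq_torsionBySet_span]
    ext x
    simp [α, mem_torsionBySet_iff, funext_iff]
  intro g hg
  obtain ⟨h, rfl⟩ :=
    Module.Injective.exists_comp_eq_of_ker_le α g (hker ▸ fun x hx => hg x hx)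
  have hsum :
      h ∘ₗ α = ∑ c : t, (c : R) • (h ∘ₗ LinearMap.single R (fun _ => X) c) := by
    ext x
    simp only [LinearMap.sum_apply, LinearMap.smul_apply, LinearMap.comp_apply, ← map_smul,
      ← map_sum]
    congr 1
    ext i
    simp [α, Finset.sum_apply, Pi.single_apply]
  rw [hsum]
  exact Submodule.sum_mem _ fun c _ => Submodule.smul_mem_smul (Ideal.subset_span c.2) trivial

theorem exists_isFiniteLength_annihilatorOf_le [IsNoetherianRing R] [Module.Finite R X]
    [Module.Injective R E] {K : Submodule R (X →ₗ[R] E)}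
    (hK : IsFiniteLength R ((X →ₗ[R] E) ⧸ K)) :
    ∃ W : Submodule R X, IsFiniteLength R W ∧ annihilatorOf R W ≤ K := by
  obtain ⟨_, _⟩ := (isFiniteLength_iff_isNoetherian_isArtinian (R := R)).mp hK
  set I := Module.annihilator R ((X →ₗ[R] E) ⧸ K)
  have := isArtinianRing_quotient_annihilator (R := R) ((X →ₗ[R] E) ⧸ K)
  refine ⟨torsionBySet R X I, isFiniteLength_torsionBySet I,
    (annihilatorOf_torsionBySet_le_smul_top (IsNoetherian.noetherian I)).trans ?_⟩
  refine Submodule.smul_le.mpr fun r hr g _ => ?_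
  simpa [← Submodule.Quotient.mk_smul, Submodule.Quotient.mk_eq_zero] using
    Module.mem_annihilator.mp hr (K.mkQ g)

theorem IsInjectiveHull.annihilatorOf_coannihilatorOf
    (hE : IsInjectiveHull R (⨁ m : MaximalSpectrum R, R ⧸ m.asIdeal) E) {W : Submodule R X}
    (hW : IsFiniteLength R W) {K : Submodule R (X →ₗ[R] E)} (hWK : annihilatorOf R W ≤ K) :
    annihilatorOf R (coannihilatorOf K) = K := by
  refine le_antisymm (fun g hg => ?_) fun k hk x hx => hx k hk
  set ρ := LinearMap.lcomp R E W.subtype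
  -- A functional on `DW` separating `ρ g` from `ρ K` would be evaluation at a common zero of `K`.
  obtain ⟨k, hk, hkg⟩ : ρ g ∈ K.map ρ := by
    by_contra hg'
    obtain ⟨Ξ, hKΞ, hΞg⟩ := hE.exists_le_ker_and_apply_ne_zero hg'
    obtain ⟨w, rfl⟩ := hE.surjective_applyₗ hW Ξ
    exact hΞg (hg w fun k hk => hKΞ (Submodule.mem_map_of_mem hk))
  have hgk : g - k ∈ annihilatorOf R W := by
    rw [annihilatorOf_eq_ker_lcomp_subtype, LinearMap.mem_ker, map_sub, hkg, sub_self]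
  simpa using K.add_mem (hWK hgk) hk

end Surjectivity

/-- Matlis duality for finite length submodules: with
`E = ⊕_{m maximal} E(R/m)` and `D = Hom_R(-, E)`, the assignment `Y ↦ D Y` (realized as
`Y ↦ ker (D X → D Y)`) is an inclusion-reversing bijection between finite length
submodules of a finitely generated module `X` and finite length factor modules of `D X`,
with `D X / ker(D X → D Y) ≅ D Y`. -/
theorem stmt9 (R : Type u) [CommRing R] [IsNoetherianRing R]
    (X : Type u) [AddCommGroup X] [Module R X] [Module.Finite R X]
    (E : Type u) [AddCommGroup E] [Module R E]
    (hE : IsInjectiveHull R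
      (DirectSum (MaximalSpectrum R) fun m => R ⧸ m.asIdeal) E) :
    Set.BijOn (fun Y : Submodule R X => annihilatorOf R (E := E) Y)
      {Y : Submodule R X | IsFiniteLength R Y}
      {K : Submodule R (X →ₗ[R] E) | IsFiniteLength R ((X →ₗ[R] E) ⧸ K)} ∧
    (∀ Y₁ Y₂ : Submodule R X, IsFiniteLength R Y₁ → IsFiniteLength R Y₂ → Y₁ ≤ Y₂ →
      annihilatorOf R (E := E) Y₂ ≤ annihilatorOf R (E := E) Y₁) ∧
    (∀ Y : Submodule R X, IsFiniteLength R Y →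
      Nonempty (((X →ₗ[R] E) ⧸ annihilatorOf R (E := E) Y) ≃ₗ[R] (Y →ₗ[R] E))) := by
  have : Module.Injective R E := hE.1
  refine ⟨⟨fun Y hY => (quotientAnnihilatorOfEquiv Y).symm.isFiniteLength
      (hE.isFiniteLength_linearMap hY), fun Y₁ _ Y₂ _ h => ?_, fun K hK => ?_⟩,
    fun _ _ _ _ h => annihilatorOf_antitone h, fun Y _ => ⟨quotientAnnihilatorOfEquiv Y⟩⟩
  · rw [← hE.coannihilatorOf_annihilatorOf Y₁, ← hE.coannihilatorOf_annihilatorOf Y₂]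
    exact congrArg coannihilatorOf h
  · obtain ⟨W, hW, hWK⟩ := exists_isFiniteLength_annihilatorOf_le hK
    have hle : coannihilatorOf K ≤ W := by
      simpa [hE.coannihilatorOf_annihilatorOf] using coannihilatorOf_antitone hWK
    exact ⟨coannihilatorOf K, hW.of_injective (Submodule.inclusion_injective hle),
      hE.annihilatorOf_coannihilatorOf hW hWK⟩

end
end

section
/- Let R be a commutative Noetherian ring and M, N finitely generated R-modules. Then add M ⊆ add N if and only if add M_p ⊆ add N_p for all prime ideals p, if and only if add M_m ⊆ add N_m for all maximal ideals m. -/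
open RingTheory IsLocalRing CategoryTheory Opposite

noncomputable section

universe u v

/-- The depth of a module over a Noetherian local ring: the supremum of lengths of
`M`-regular sequences contained in the maximal ideal. -/
def moduleDepth (R : Type u) [CommRing R] [IsLocalRing R]
    (M : Type v) [AddCommGroup M] [Module R M] : ℕ∞ :=
  sSup {n : ℕ∞ | ∃ rs : List R, (rs.length : ℕ∞) = n ∧
    (∀ r ∈ rs, r ∈ maximalIdeal R) ∧ RingTheory.Sequence.IsRegular M rs}

/-- `M` is a maximal Cohen–Macaulay `R`-module: at every prime `p`,
the depth of `M_p` over `R_p` equals `dim R_p`. -/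
def IsMCM (R : Type u) [CommRing R] (M : Type v) [AddCommGroup M] [Module R M] : Prop :=
  ∀ p : PrimeSpectrum R,
    (moduleDepth (Localization.AtPrime p.asIdeal)
        (LocalizedModule p.asIdeal.primeCompl M) : WithBot ℕ∞)
      = ringKrullDim (Localization.AtPrime p.asIdeal)

/-- `R` is a Cohen–Macaulay ring. -/
def IsCMRing (R : Type u) [CommRing R] : Prop := IsMCM R R

/-- All maximal ideals of `R` have the same height. -/
def IsEquicodimensional (R : Type u) [CommRing R] : Prop :=
  ∀ p q : PrimeSpectrum R, p.asIdeal.IsMaximal → q.asIdeal.IsMaximal →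
    Order.height p = Order.height q

/-- `M` lies in `add N`: `M` is a direct summand of a finite direct sum of copies of `N`. -/
def InAdd (A : Type*) [Semiring A] (M : Type*) [AddCommMonoid M] [Module A M]
    (N : Type*) [AddCommMonoid N] [Module A N] : Prop :=
  ∃ (n : ℕ) (i : M →ₗ[A] (Fin n → N)) (p : (Fin n → N) →ₗ[A] M),
    p ∘ₗ i = LinearMap.id

/-! If `h₁, …, hₙ` generate `Hom_R(N, M)`, every map `N^k → M` factors through
`(h₁, …, hₙ) : N^n → M`, so `M ∈ add N` exactly when this one map splits. As `N` is finitely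
presented, the localized `hᵢ` still generate `Hom(N_m, M_m)`, and a map onto the finitely
presented `M` splits as soon as it splits at every maximal ideal `m`. -/

section Approximation

variable {A : Type*} [CommSemiring A] {M N : Type*} [AddCommMonoid M] [Module A M]
  [AddCommMonoid N] [Module A N] {n : ℕ} (h : Fin n → N →ₗ[A] M)

theorem exists_eq_lsum_comp_of_span_eq_top (hh : Submodule.span A (Set.range h) = ⊤)
    {k : ℕ} (p : (Fin k → N) →ₗ[A] M) :
    ∃ T : (Fin k → N) →ₗ[A] (Fin n → N), p = LinearMap.lsum A (fun _ ↦ N) A h ∘ₗ T := by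
  have hmem (j : Fin k) :
      p ∘ₗ LinearMap.single A (fun _ ↦ N) j ∈ Submodule.span A (Set.range h) :=
    hh ▸ Submodule.mem_top
  choose a ha using fun j ↦ (Submodule.mem_span_range_iff_exists_fun A).mp (hmem j)
  refine ⟨LinearMap.pi fun t ↦ ∑ j, a j t • LinearMap.proj j, LinearMap.pi_ext' fun j ↦ ?_⟩
  rw [← ha j]
  ext y
  simp [Pi.single_apply]

theorem inAdd_iff_exists_rightInverse_lsum (hh : Submodule.span A (Set.range h) = ⊤) :
    InAdd A M N ↔ ∃ g : M →ₗ[A] (Fin n → N), LinearMap.lsum A (fun _ ↦ N) A h ∘ₗ g = .id := by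
  refine ⟨fun ⟨k, i, p, hpi⟩ ↦ ?_, fun ⟨g, hg⟩ ↦ ⟨n, g, _, hg⟩⟩
  obtain ⟨T, rfl⟩ := exists_eq_lsum_comp_of_span_eq_top h hh p
  exact ⟨T ∘ₗ i, hpi⟩

end Approximation

namespace LocalizedModule

variable {R : Type*} [CommSemiring R] (S : Submonoid R)
  {M N P : Type*} [AddCommMonoid M] [Module R M] [AddCommMonoid N] [Module R N]
  [AddCommMonoid P] [Module R P]

theorem map_comp (f : M →ₗ[R] N) (g : N →ₗ[R] P) :
    map S (g ∘ₗ f) = map S g ∘ₗ map S f := by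
  ext x
  induction x using LocalizedModule.induction_on with
  | _ m s => simp

variable (N) (ι : Type*) [Finite ι]

def piEquiv :
    LocalizedModule S (ι → N) ≃ₗ[Localization S] (ι → LocalizedModule S N) :=
  IsLocalizedModule.mapEquiv S (mkLinearMap S (ι → N))
    (LinearMap.pi fun i ↦ mkLinearMap S N ∘ₗ LinearMap.proj i) (Localization S) (.refl R _)

@[simp]
theorem piEquiv_mk (x : ι → N) (s : S) : piEquiv S N ι (mk x s) = fun i ↦ mk (x i) s := by
  simp only [piEquiv, IsLocalizedModule.mk_eq_mk', IsLocalizedModule.mapEquiv_apply,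
    IsLocalizedModule.map_mk', IsLocalizedModule.mk'_eq_iff]
  ext i
  simp

variable {N ι} [Fintype ι] [DecidableEq ι]

theorem map_lsum (h : ι → N →ₗ[R] M) :
    map S (LinearMap.lsum R (fun _ ↦ N) R h) =
      LinearMap.lsum (Localization S) (fun _ ↦ LocalizedModule S N) (Localization S)
        (fun i ↦ map S (h i)) ∘ₗ (piEquiv S N ι).toLinearMap := by
  ext x
  induction x using LocalizedModule.induction_on with
  | _ m s => simp

end LocalizedModule

theorem InAdd.localizedModule {R : Type*} [CommSemiring R] (S : Submonoid R)
    {M N : Type*} [AddCommMonoid M] [Module R M] [AddCommMonoid N] [Module R N]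
    (hMN : InAdd R M N) : InAdd (Localization S) (LocalizedModule S M) (LocalizedModule S N) := by
  obtain ⟨n, i, p, hpi⟩ := hMN
  refine ⟨n, (LocalizedModule.piEquiv S N (Fin n)).toLinearMap ∘ₗ LocalizedModule.map S i,
    LocalizedModule.map S p ∘ₗ (LocalizedModule.piEquiv S N (Fin n)).symm.toLinearMap, ?_⟩
  ext x
  simp [← LinearMap.comp_apply (LocalizedModule.map S p), ← LocalizedModule.map_comp, hpi]

theorem inAdd_of_forall_maximal {R : Type*} [CommRing R] [IsNoetherianRing R]
    {M N : Type*} [AddCommGroup M] [Module R M] [Module.Finite R M]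
    [AddCommGroup N] [Module R N] [Module.Finite R N]
    (H : ∀ m : MaximalSpectrum R,
      InAdd (Localization.AtPrime m.asIdeal) (LocalizedModule m.asIdeal.primeCompl M)
        (LocalizedModule m.asIdeal.primeCompl N)) : InAdd R M N := by
  have : Module.FinitePresentation R M := Module.finitePresentation_of_finite R M
  have : Module.FinitePresentation R N := Module.finitePresentation_of_finite R N
  obtain ⟨n, h, hspan⟩ := Module.Finite.exists_fin (R := R) (M := N →ₗ[R] M)
  rw [inAdd_iff_exists_rightInverse_lsum h hspan]
  refine LinearMap.split_surjective_of_localization_maximal _ fun I hI ↦ ?_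
  have hspan_loc := span_eq_top_of_isLocalizedModule (Localization.AtPrime I) I.primeCompl
    (LocalizedModule.map I.primeCompl) hspan
  rw [← Set.range_comp] at hspan_loc
  obtain ⟨g, hg⟩ := (inAdd_iff_exists_rightInverse_lsum _ hspan_loc).mp (H ⟨I, hI⟩)
  refine ⟨(LocalizedModule.piEquiv I.primeCompl N (Fin n)).symm.toLinearMap ∘ₗ g, ?_⟩
  rw [LocalizedModule.map_lsum, LinearMap.comp_assoc, LinearEquiv.comp_symm_assoc]
  exact hg

/-- `add M ⊆ add N` can be checked at all primes, or at all maximal ideals. -/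
theorem stmt13 (R : Type u) [CommRing R] [IsNoetherianRing R]
    (M N : Type u) [AddCommGroup M] [Module R M] [Module.Finite R M]
    [AddCommGroup N] [Module R N] [Module.Finite R N] :
    (InAdd R M N ↔ ∀ p : PrimeSpectrum R,
      InAdd (Localization.AtPrime p.asIdeal) (LocalizedModule p.asIdeal.primeCompl M)
        (LocalizedModule p.asIdeal.primeCompl N)) ∧
    (InAdd R M N ↔ ∀ m : MaximalSpectrum R,
      InAdd (Localization.AtPrime m.asIdeal) (LocalizedModule m.asIdeal.primeCompl M)
        (LocalizedModule m.asIdeal.primeCompl N)) :=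
  ⟨⟨fun hMN _ ↦ hMN.localizedModule _,
      fun H ↦ inAdd_of_forall_maximal fun m ↦ H ⟨m.asIdeal, m.isMaximal.isPrime⟩⟩,
    ⟨fun hMN _ ↦ hMN.localizedModule _, inAdd_of_forall_maximal⟩⟩

end
end

section
/- Let R be a commutative Noetherian ring, M and N finitely generated R-modules, f: M^{⊕m} → N a right add M-approximation of N, and g: N^{⊕n} → M a right add N-approximation of M. Then M ∈ add N if and only if the composite M^{⊕mn} → N^{⊕n} → M induces a surjection Hom_R(M, M^{⊕mn}) → End_R(M). -/
/-! If `M ∈ add N`, every endomorphism of `M` factors through a sum of copies of `N`, hence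
through `g`, since surjectivity of `Hom(X, g)` passes to finite sums and summands of `X`; the
resulting map `M → N^n` lifts through `f^n` because `f` is an `add M`-approximation.
Conversely, lifting `id_M` through the composite splits `g`, so `M` is a summand of `N^n`. -/

open RingTheory IsLocalRing CategoryTheory Opposite

noncomputable section

universe u v

/-- `Hom(X, f)` is surjective; a right `add X`-approximation is such an `f` with `Y ∈ add X`. -/
def HomSurjective (R : Type*) [Semiring R] (X : Type*) [AddCommMonoid X] [Module R X]
    {Y Z : Type*} [AddCommMonoid Y] [Module R Y] [AddCommMonoid Z] [Module R Z]
    (f : Y →ₗ[R] Z) : Prop :=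
  ∀ h : X →ₗ[R] Z, ∃ k : X →ₗ[R] Y, h = f ∘ₗ k

namespace HomSurjective

variable {R : Type*} [Semiring R] {X X' Y Z W : Type*}
  [AddCommMonoid X] [Module R X] [AddCommMonoid X'] [Module R X']
  [AddCommMonoid Y] [Module R Y] [AddCommMonoid Z] [Module R Z] [AddCommMonoid W] [Module R W]

theorem comp {g : Z →ₗ[R] W} {f : Y →ₗ[R] Z} (hg : HomSurjective R X g)
    (hf : HomSurjective R X f) : HomSurjective R X (g ∘ₗ f) := by
  intro h
  obtain ⟨k, rfl⟩ := hg h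
  obtain ⟨k', rfl⟩ := hf k
  exact ⟨k', rfl⟩

theorem of_comp {g : Z →ₗ[R] W} {f : Y →ₗ[R] Z} (h : HomSurjective R X (g ∘ₗ f)) :
    HomSurjective R X g := fun φ => by
  obtain ⟨k, rfl⟩ := h φ
  exact ⟨f ∘ₗ k, rfl⟩

theorem pi {ι : Type*} {f : Y →ₗ[R] Z} (hf : HomSurjective R X f) :
    HomSurjective R X (LinearMap.pi fun i => f ∘ₗ LinearMap.proj i : (ι → Y) →ₗ[R] ι → Z) := by
  intro h
  choose k hk using fun i => hf (LinearMap.proj i ∘ₗ h)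
  refine ⟨LinearMap.pi k, ?_⟩
  ext x i
  exact LinearMap.congr_fun (hk i) x

theorem of_pi {ι : Type*} [Fintype ι] [DecidableEq ι] {f : Y →ₗ[R] Z}
    (hf : HomSurjective R X f) : HomSurjective R (ι → X) f := by
  intro h
  choose k hk using fun i => hf (h ∘ₗ LinearMap.single R (fun _ => X) i)
  refine ⟨LinearMap.lsum R (fun _ => X) ℕ k, LinearMap.pi_ext fun i x => ?_⟩
  rw [LinearMap.comp_apply, LinearMap.lsum_piSingle]
  exact LinearMap.congr_fun (hk i) x

theorem of_retract {f : Y →ₗ[R] Z} {i : X' →ₗ[R] X} {p : X →ₗ[R] X'}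
    (hpi : p ∘ₗ i = LinearMap.id) (hf : HomSurjective R X f) : HomSurjective R X' f := by
  intro h
  obtain ⟨k, hk⟩ := hf (h ∘ₗ p)
  refine ⟨k ∘ₗ i, ?_⟩
  rw [← LinearMap.comp_assoc, ← hk, LinearMap.comp_assoc, hpi, LinearMap.comp_id]

theorem of_inAdd {N : Type*} [AddCommMonoid N] [Module R N] {f : Y →ₗ[R] Z}
    (hX : InAdd R X N) (hf : HomSurjective R N f) : HomSurjective R X f := by
  obtain ⟨n, i, p, hpi⟩ := hX
  exact hf.of_pi.of_retract hpi

theorem inAdd {N : Type*} [AddCommMonoid N] [Module R N] {n : ℕ} {g : (Fin n → N) →ₗ[R] X}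
    (hg : HomSurjective R X g) : InAdd R X N := by
  obtain ⟨ψ, hψ⟩ := hg LinearMap.id
  exact ⟨n, ψ, g, hψ.symm⟩

end HomSurjective

theorem stmt14_general (R : Type u) [CommRing R]
    (M N : Type u) [AddCommGroup M] [Module R M]
    [AddCommGroup N] [Module R N]
    (m n : ℕ) (f : (Fin m → M) →ₗ[R] N)
    (hf : ∀ h : M →ₗ[R] N, ∃ k : M →ₗ[R] (Fin m → M), h = f ∘ₗ k)
    (g : (Fin n → N) →ₗ[R] M)
    (hg : ∀ h : N →ₗ[R] M, ∃ k : N →ₗ[R] (Fin n → N), h = g ∘ₗ k) :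
    InAdd R M N ↔
      ∀ φ : M →ₗ[R] M, ∃ ψ : M →ₗ[R] (Fin n → Fin m → M),
        φ = (g ∘ₗ LinearMap.pi (fun i => f ∘ₗ LinearMap.proj i)) ∘ₗ ψ := by
  exact ⟨fun hM => (HomSurjective.of_inAdd hM hg).comp (HomSurjective.pi hf),
    fun h => (HomSurjective.of_comp h).inAdd⟩

/-- given a right `add M`-approximation `f : M^m → N` and a right
`add N`-approximation `g : N^n → M`, one has `M ∈ add N` iff the composite
`M^{mn} → N^n → M` induces a surjection `Hom(M, M^{mn}) → End(M)`. -/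
theorem stmt14 (R : Type u) [CommRing R] [IsNoetherianRing R]
    (M N : Type u) [AddCommGroup M] [Module R M] [Module.Finite R M]
    [AddCommGroup N] [Module R N] [Module.Finite R N]
    (m n : ℕ) (f : (Fin m → M) →ₗ[R] N)
    (hf : ∀ h : M →ₗ[R] N, ∃ k : M →ₗ[R] (Fin m → M), h = f ∘ₗ k)
    (g : (Fin n → N) →ₗ[R] M)
    (hg : ∀ h : N →ₗ[R] M, ∃ k : N →ₗ[R] (Fin n → N), h = g ∘ₗ k) :
    InAdd R M N ↔
      ∀ φ : M →ₗ[R] M, ∃ ψ : M →ₗ[R] (Fin n → Fin m → M),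
        φ = (g ∘ₗ LinearMap.pi (fun i => f ∘ₗ LinearMap.proj i)) ∘ₗ ψ :=
  stmt14_general R M N m n f hf g hg

end
end
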